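/- Let Q be a finite set of size m ≥ 3, n ≥ 1 an integer, σ ≥ 0 a real, set p := ln m, and let (z^t)_{t≥0} be a deficit process on Q satisfying the potential-rule moment conditions with parameters n, σ², p. Then for every t ≥ 0 and every q ∈ Q, z^t_q ≤ e · √(4p² + 2√e · p · σ² · t / n). -/

import Mathlib

/-
Write `f u = (u² + 4p²)^p` and `Φ(z) = ∑_q f(z_q)`. On a unit window around `u` the second
derivative of `f` is at most `4ep²(u² + 4p²)^(p-1)`, so a second-order Taylor bound, the
nonpositive drift `∑_k Δ_q(k) ≤ 0` (against `f' ≥ 0` on `u ≥ 0`) and `∑_k Δ_q(k)² ≤ σ²` give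
`Φ(z^{t+1}) ≤ Φ(z^t) + (2ep²σ²/n) ∑_q (z_q² + 4p²)^(p-1)`. Hölder bounds the last sum by
`m^(1/p) Φ(z^t)^((p-1)/p)`, and Bernoulli's inequality then propagates
`Φ(z^t) ≤ B_t^p` with `B_t = m^(1/p) (4p² + 2epσ²t/n)` linear in `t`. Hence
`z_q² + 4p² ≤ B_t`, and for `p = ln m` we have `m^(1/p) = e`.
-/

open Finset

/-- The potential component `f p u = (u² + 4p²) ^ p` (real power). -/
noncomputable def potComp (p u : ℝ) : ℝ := (u ^ 2 + 4 * p ^ 2) ^ p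

/-- A deficit process on `Q` satisfying the potential-rule moment conditions with
parameters `n`, `σ²`, `p`. -/
def DeficitProcess (Q : Type*) [Fintype Q] (n : ℕ) (σ p : ℝ) (z : ℕ → Q → ℝ) : Prop :=
  (∀ t q, 0 ≤ z t q) ∧ (∀ q, z 0 q = 0) ∧
  ∀ t : ℕ, ∃ Δ : Q → Fin n → ℝ,
    (∀ q k, -1 ≤ Δ q k ∧ Δ q k ≤ 1) ∧
    (∀ q, ∑ k, Δ q k ≤ 0) ∧
    (∀ q, ∑ k, (Δ q k) ^ 2 ≤ σ ^ 2) ∧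
    (∑ q, potComp p (z (t + 1) q) ≤
      (1 / (n : ℝ)) * ∑ k, ∑ q, potComp p (max (z t q + Δ q k) 0))

open Real Set

theorem ConvexOn.add_mul_sub_le_of_hasDerivAt {S : Set ℝ} {f : ℝ → ℝ} {f' x y : ℝ}
    (hfc : ConvexOn ℝ S f) (hx : x ∈ S) (hy : y ∈ S) (hf : HasDerivAt f f' x) :
    f x + f' * (y - x) ≤ f y := by
  rcases lt_trichotomy x y with hxy | rfl | hyx
  · have := hfc.le_slope_of_hasDerivAt hx hy hxy hf
    rw [slope_def_field, le_div_iff₀ (sub_pos.2 hxy)] at this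
    linarith
  · simp
  · have := hfc.slope_le_of_hasDerivAt hy hx hyx hf
    rw [slope_def_field, div_le_iff₀ (sub_pos.2 hyx)] at this
    linarith

theorem le_add_mul_sub_add_of_deriv2_le {f f' f'' : ℝ → ℝ} {a b u y M : ℝ}
    (hf : ∀ x, HasDerivAt f (f' x) x) (hf' : ∀ x, HasDerivAt f' (f'' x) x)
    (hM : ∀ x ∈ Icc a b, f'' x ≤ M) (hu : u ∈ Icc a b) (hy : y ∈ Icc a b) :
    f y ≤ f u + f' u * (y - u) + M / 2 * (y - u) ^ 2 := by
  have hφ : ∀ x, HasDerivAt (fun x => M / 2 * (x - u) ^ 2 - f x) (M * (x - u) - f' x) x :=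
    fun x => ((((hasDerivAt_id' x).sub_const u).pow 2).const_mul (M / 2) |>.sub (hf x))
      |>.congr_deriv (by ring)
  have hφ' : ∀ x, HasDerivAt (fun x => M * (x - u) - f' x) (M - f'' x) x :=
    fun x => (((hasDerivAt_id' x).sub_const u).const_mul M |>.sub (hf' x)).congr_deriv (by ring)
  have hconv : ConvexOn ℝ (Icc a b) (fun x => M / 2 * (x - u) ^ 2 - f x) := by
    refine convexOn_of_hasDerivWithinAt2_nonneg (convex_Icc a b)
      (fun x _ => (hφ x).continuousAt.continuousWithinAt)
      (fun x _ => (hφ x).hasDerivWithinAt) (fun x _ => (hφ' x).hasDerivWithinAt) ?_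
    rw [interior_Icc]
    exact fun x hx => sub_nonneg.2 (hM x (Ioo_subset_Icc_self hx))
  have := hconv.add_mul_sub_le_of_hasDerivAt hu hy (hφ u)
  simp only [sub_self] at this
  linarith

section PotComp

variable {p : ℝ}

theorem hasDerivAt_sq_add_four_mul_sq_rpow (hp : p ≠ 0) (r x : ℝ) :
    HasDerivAt (fun x => (x ^ 2 + 4 * p ^ 2) ^ r)
      (2 * r * x * (x ^ 2 + 4 * p ^ 2) ^ (r - 1)) x :=
  ((((hasDerivAt_pow 2 x).add_const (4 * p ^ 2)).rpow_const
    (Or.inl (by positivity)))).congr_deriv (by push_cast; ring)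

theorem hasDerivAt_potComp (hp : p ≠ 0) (x : ℝ) :
    HasDerivAt (potComp p) (2 * p * x * (x ^ 2 + 4 * p ^ 2) ^ (p - 1)) x :=
  hasDerivAt_sq_add_four_mul_sq_rpow hp p x

theorem hasDerivAt_potComp_deriv (hp : p ≠ 0) (x : ℝ) :
    HasDerivAt (fun x => 2 * p * x * (x ^ 2 + 4 * p ^ 2) ^ (p - 1))
      (2 * p * (x ^ 2 + 4 * p ^ 2) ^ (p - 1)
        + 4 * p * (p - 1) * x ^ 2 * (x ^ 2 + 4 * p ^ 2) ^ (p - 2)) x :=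
  (((hasDerivAt_id' x).const_mul (2 * p)).mul
    (hasDerivAt_sq_add_four_mul_sq_rpow hp (p - 1) x)).congr_deriv (by ring_nf)

theorem potComp_deriv2_le (hp : 1 ≤ p) (x : ℝ) :
    2 * p * (x ^ 2 + 4 * p ^ 2) ^ (p - 1)
        + 4 * p * (p - 1) * x ^ 2 * (x ^ 2 + 4 * p ^ 2) ^ (p - 2)
      ≤ 4 * p ^ 2 * (x ^ 2 + 4 * p ^ 2) ^ (p - 1) := by
  set A := x ^ 2 + 4 * p ^ 2
  have hA : 0 < A := by positivity
  have hx : x ^ 2 * A ^ (p - 2) ≤ A ^ (p - 1) := by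
    rw [show p - 1 = p - 2 + 1 by ring, rpow_add_one hA.ne', mul_comm]
    exact mul_le_mul_of_nonneg_left (le_add_of_nonneg_right (by positivity)) (by positivity)
  have := mul_le_mul_of_nonneg_left hx (by nlinarith : 0 ≤ 4 * p * (p - 1))
  have : 0 ≤ p * A ^ (p - 1) := by positivity
  linarith

theorem rpow_sub_one_le_exp_one_mul (hp : 1 ≤ p) {x u : ℝ} (hxu : |x - u| ≤ 1) :
    (x ^ 2 + 4 * p ^ 2) ^ (p - 1) ≤ exp 1 * (u ^ 2 + 4 * p ^ 2) ^ (p - 1) := by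
  have hp0 : 0 < p := by linarith
  have hratio : x ^ 2 + 4 * p ^ 2 ≤ exp (1 / p) * (u ^ 2 + 4 * p ^ 2) := by
    have hx : x ^ 2 ≤ (|u| + 1) ^ 2 := by
      rw [← sq_abs x]
      exact pow_le_pow_left₀ (abs_nonneg x) (by linarith [abs_sub_abs_le_abs_sub x u]) 2
    have hexp : (1 + 1 / (2 * p)) ^ 2 ≤ exp (1 / p) := by
      calc (1 + 1 / (2 * p)) ^ 2 ≤ exp (1 / (2 * p)) ^ 2 := by
            gcongr; linarith [add_one_le_exp (1 / (2 * p))]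
        _ = exp (1 / p) := by rw [← exp_nat_mul]; congr 1; field_simp; norm_num
    -- AM-GM: `4p|u| ≤ u² + 4p²`
    have hamgm : (|u| + 1) ^ 2 + 4 * p ^ 2 ≤ (1 + 1 / (2 * p)) ^ 2 * (u ^ 2 + 4 * p ^ 2) := by
      rw [show (1 + 1 / (2 * p)) ^ 2 = (2 * p + 1) ^ 2 / (4 * p ^ 2) by field_simp; ring,
        ← sq_abs u, div_mul_eq_mul_div, le_div_iff₀ (by positivity)]
      nlinarith [sq_nonneg (|u| - 2 * p), abs_nonneg u]
    nlinarith [hexp, sq_nonneg u]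
  calc (x ^ 2 + 4 * p ^ 2) ^ (p - 1) ≤ (exp (1 / p) * (u ^ 2 + 4 * p ^ 2)) ^ (p - 1) :=
        rpow_le_rpow (by positivity) hratio (by linarith)
    _ = exp ((p - 1) / p) * (u ^ 2 + 4 * p ^ 2) ^ (p - 1) := by
        rw [mul_rpow (by positivity) (by positivity), ← exp_mul]; ring_nf
    _ ≤ exp 1 * (u ^ 2 + 4 * p ^ 2) ^ (p - 1) := by
        gcongr; rw [div_le_one hp0]; linarith

theorem potComp_max_zero_le (hp : 0 ≤ p) (x : ℝ) : potComp p (max x 0) ≤ potComp p x := by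
  refine rpow_le_rpow (by positivity) (add_le_add_left ?_ _) hp
  rcases le_total x 0 with hx | hx
  · simpa [max_eq_right hx] using sq_nonneg x
  · rw [max_eq_left hx]

theorem potComp_max_add_le (hp : 1 ≤ p) (u : ℝ) {d : ℝ} (hd : |d| ≤ 1) :
    potComp p (max (u + d) 0) ≤ potComp p u + 2 * p * u * (u ^ 2 + 4 * p ^ 2) ^ (p - 1) * d
      + 2 * exp 1 * p ^ 2 * (u ^ 2 + 4 * p ^ 2) ^ (p - 1) * d ^ 2 := by
  have hp0 : p ≠ 0 := by positivity
  have hM : ∀ x ∈ Icc (u - 1) (u + 1),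
      2 * p * (x ^ 2 + 4 * p ^ 2) ^ (p - 1)
        + 4 * p * (p - 1) * x ^ 2 * (x ^ 2 + 4 * p ^ 2) ^ (p - 2)
      ≤ 4 * exp 1 * p ^ 2 * (u ^ 2 + 4 * p ^ 2) ^ (p - 1) := by
    intro x hx
    have hxu : |x - u| ≤ 1 := abs_le.2 ⟨by linarith [hx.1], by linarith [hx.2]⟩
    calc _ ≤ 4 * p ^ 2 * (x ^ 2 + 4 * p ^ 2) ^ (p - 1) := potComp_deriv2_le hp x
      _ ≤ 4 * p ^ 2 * (exp 1 * (u ^ 2 + 4 * p ^ 2) ^ (p - 1)) := by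
          gcongr; exact rpow_sub_one_le_exp_one_mul hp hxu
      _ = _ := by ring
  have hd' := abs_le.1 hd
  have htaylor := le_add_mul_sub_add_of_deriv2_le (hasDerivAt_potComp hp0)
    (hasDerivAt_potComp_deriv hp0) hM
    (⟨by linarith, by linarith⟩ : u ∈ Icc (u - 1) (u + 1))
    (⟨by linarith, by linarith⟩ : u + d ∈ Icc (u - 1) (u + 1))
  calc potComp p (max (u + d) 0) ≤ potComp p (u + d) := potComp_max_zero_le (by linarith) _
    _ ≤ _ := htaylor
    _ = _ := by ring

theorem sum_potComp_max_add_le {ι : Type*} [Fintype ι] (hp : 1 ≤ p) {u σ : ℝ} (hu : 0 ≤ u)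
    {Δ : ι → ℝ} (hΔ : ∀ k, |Δ k| ≤ 1) (hsum : ∑ k, Δ k ≤ 0) (hsq : ∑ k, Δ k ^ 2 ≤ σ ^ 2) :
    ∑ k, potComp p (max (u + Δ k) 0)
      ≤ Fintype.card ι * potComp p u
        + 2 * exp 1 * p ^ 2 * σ ^ 2 * (u ^ 2 + 4 * p ^ 2) ^ (p - 1) := by
  set A := (u ^ 2 + 4 * p ^ 2) ^ (p - 1)
  have hA : 0 ≤ A := by positivity
  calc ∑ k, potComp p (max (u + Δ k) 0)
      ≤ ∑ k, (potComp p u + 2 * p * u * A * Δ k + 2 * exp 1 * p ^ 2 * A * Δ k ^ 2) :=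
        Finset.sum_le_sum fun k _ => potComp_max_add_le hp u (hΔ k)
    _ = Fintype.card ι * potComp p u + 2 * p * u * A * ∑ k, Δ k
          + 2 * exp 1 * p ^ 2 * A * ∑ k, Δ k ^ 2 := by
        simp only [Finset.sum_add_distrib, ← Finset.mul_sum, Finset.sum_const, Finset.card_univ,
          nsmul_eq_mul]
    _ ≤ Fintype.card ι * potComp p u + 2 * p * u * A * 0 + 2 * exp 1 * p ^ 2 * A * σ ^ 2 := by
        gcongr
    _ = _ := by ring

end PotComp

theorem sum_rpow_sub_one_le {ι : Type*} (s : Finset ι) {p : ℝ} (hp : 1 < p) {a : ι → ℝ}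
    (ha : ∀ i ∈ s, 0 ≤ a i) :
    ∑ i ∈ s, a i ^ (p - 1) ≤ (s.card : ℝ) ^ p⁻¹ * (∑ i ∈ s, a i ^ p) ^ ((p - 1) / p) := by
  have hp1 : p - 1 ≠ 0 := by linarith
  have holder := inner_le_Lp_mul_Lq_of_nonneg s (HolderConjugate.conjExponent hp).symm
    (f := fun i => a i ^ (p - 1)) (g := fun _ => 1) (fun i hi => rpow_nonneg (ha i hi) _)
    (fun _ _ => zero_le_one)
  have hpow : ∀ i ∈ s, (a i ^ (p - 1)) ^ conjExponent p = a i ^ p := fun i hi => by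
    rw [← rpow_mul (ha i hi), conjExponent, mul_div_cancel₀ _ hp1]
  simp only [mul_one, one_rpow, Finset.sum_const, nsmul_eq_mul, Finset.sum_congr rfl hpow]
    at holder
  rwa [conjExponent, one_div_div, one_div, mul_comm] at holder

theorem rpow_add_mul_rpow_sub_one_le {p B δ : ℝ} (hp : 1 ≤ p) (hB : 0 < B) (hδ : -B ≤ δ) :
    B ^ p + p * B ^ (p - 1) * δ ≤ (B + δ) ^ p := by
  have hs : -1 ≤ δ / B := by rw [le_div_iff₀ hB]; linarith
  calc B ^ p + p * B ^ (p - 1) * δ = B ^ p * (1 + p * (δ / B)) := by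
        rw [rpow_sub_one hB.ne']; field_simp
    _ ≤ B ^ p * (1 + δ / B) ^ p := by gcongr; exact one_add_mul_self_le_rpow_one_add hs hp
    _ = (B + δ) ^ p := by
        rw [← mul_rpow hB.le (by linarith), mul_one_add, mul_div_cancel₀ _ hB.ne']

noncomputable def potential {Q : Type*} [Fintype Q] (p : ℝ) (x : Q → ℝ) : ℝ :=
  ∑ q, potComp p (x q)

namespace DeficitProcess

variable {Q : Type*} [Fintype Q] {n : ℕ} {σ p : ℝ} {z : ℕ → Q → ℝ}

theorem potential_zero (h : DeficitProcess Q n σ p z) :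
    potential p (z 0) = Fintype.card Q * (4 * p ^ 2) ^ p := by
  simp [potential, potComp, h.2.1]

theorem potential_succ_le (h : DeficitProcess Q n σ p z) (hp : 1 ≤ p) (hn : n ≠ 0) (t : ℕ) :
    potential p (z (t + 1)) ≤ potential p (z t)
      + 2 * exp 1 * p ^ 2 * σ ^ 2 / n * ∑ q, (z t q ^ 2 + 4 * p ^ 2) ^ (p - 1) := by
  obtain ⟨Δ, hΔ, hsum, hsq, hpot⟩ := h.2.2 t
  calc potential p (z (t + 1))
      ≤ 1 / n * ∑ q, ∑ k, potComp p (max (z t q + Δ q k) 0) := by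
        rw [Finset.sum_comm]; exact hpot
    _ ≤ 1 / n * ∑ q, (n * potComp p (z t q)
          + 2 * exp 1 * p ^ 2 * σ ^ 2 * (z t q ^ 2 + 4 * p ^ 2) ^ (p - 1)) := by
        gcongr with q
        simpa using sum_potComp_max_add_le hp (h.1 t q) (fun k => abs_le.2 (hΔ q k)) (hsum q)
          (hsq q)
    _ = _ := by
        simp only [potential, Finset.sum_add_distrib, ← Finset.mul_sum]
        field_simp

theorem potential_le (h : DeficitProcess Q n σ p z) [Nonempty Q] (hp : 1 < p) (hn : n ≠ 0)
    (t : ℕ) :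
    potential p (z t)
      ≤ ((Fintype.card Q : ℝ) ^ p⁻¹ * (4 * p ^ 2 + 2 * exp 1 * p * σ ^ 2 * t / n)) ^ p := by
  set c := (Fintype.card Q : ℝ) ^ p⁻¹
  have hc : 0 < c := by positivity
  induction t with
  | zero =>
    rw [h.potential_zero, Nat.cast_zero, mul_zero, zero_div, add_zero,
      mul_rpow hc.le (by positivity), rpow_inv_rpow (by positivity) (by positivity)]
  | succ t ih =>
    set B := c * (4 * p ^ 2 + 2 * exp 1 * p * σ ^ 2 * t / n)
    have hB : 0 < B := by positivity
    have hsum : ∑ q, (z t q ^ 2 + 4 * p ^ 2) ^ (p - 1) ≤ c * B ^ (p - 1) := by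
      calc ∑ q, (z t q ^ 2 + 4 * p ^ 2) ^ (p - 1)
          ≤ c * potential p (z t) ^ ((p - 1) / p) :=
            sum_rpow_sub_one_le Finset.univ hp fun q _ => by positivity
        _ ≤ c * (B ^ p) ^ ((p - 1) / p) := by
            gcongr
            exact Finset.sum_nonneg fun q _ => by unfold potComp; positivity
        _ = c * B ^ (p - 1) := by
            rw [← rpow_mul hB.le, mul_div_cancel₀ _ (by positivity)]
    calc potential p (z (t + 1))
        ≤ B ^ p + 2 * exp 1 * p ^ 2 * σ ^ 2 / n * (c * B ^ (p - 1)) := by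
          grw [h.potential_succ_le hp.le hn, ih, hsum]
      _ = B ^ p + p * B ^ (p - 1) * (c * (2 * exp 1 * p * σ ^ 2 / n)) := by ring
      _ ≤ (B + c * (2 * exp 1 * p * σ ^ 2 / n)) ^ p :=
          rpow_add_mul_rpow_sub_one_le hp.le hB ((neg_nonpos.2 hB.le).trans (by positivity))
      _ = _ := by simp only [B]; push_cast; ring_nf

theorem sq_add_le (h : DeficitProcess Q n σ p z) [Nonempty Q] (hp : 1 < p) (hn : n ≠ 0)
    (t : ℕ) (q : Q) :
    z t q ^ 2 + 4 * p ^ 2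
      ≤ (Fintype.card Q : ℝ) ^ p⁻¹ * (4 * p ^ 2 + 2 * exp 1 * p * σ ^ 2 * t / n) := by
  have hp0 : 0 < p := by linarith
  rw [← rpow_le_rpow_iff (by positivity) (by positivity) hp0]
  calc (z t q ^ 2 + 4 * p ^ 2) ^ p ≤ potential p (z t) :=
        Finset.single_le_sum (f := fun q => potComp p (z t q))
          (fun q _ => by unfold potComp; positivity) (Finset.mem_univ q)
    _ ≤ _ := h.potential_le hp hn t

end DeficitProcess

theorem le_exp_one_mul_sqrt {x a r : ℝ} (ha : 0 ≤ a) (hr : 0 ≤ r)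
    (h : x ^ 2 + a ≤ exp 1 * (a + 2 * exp 1 * r)) :
    x ≤ exp 1 * sqrt (a + 2 * sqrt (exp 1) * r) := by
  have he : 1 ≤ exp 1 := one_le_exp zero_le_one
  have hse : 1 ≤ sqrt (exp 1) := one_le_sqrt.2 he
  have hx : x ^ 2 ≤ exp 1 ^ 2 * (a + 2 * sqrt (exp 1) * r) := by
    nlinarith [mul_nonneg (mul_nonneg (exp_pos 1).le (sub_nonneg.2 he)) ha,
      mul_nonneg (mul_nonneg (sq_nonneg (exp 1)) hr) (sub_nonneg.2 hse)]
  calc x ≤ sqrt (exp 1 ^ 2 * (a + 2 * sqrt (exp 1) * r)) := le_sqrt_of_sq_le hx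
    _ = exp 1 * sqrt (a + 2 * sqrt (exp 1) * r) := by
        rw [sqrt_mul (by positivity), sqrt_sq (exp_pos 1).le]

theorem perpetual_fairness_log_p_general (Q : Type*) [Fintype Q] (hm : 3 ≤ Fintype.card Q)
    (n : ℕ) (hn : 1 ≤ n) (σ : ℝ)
    (z : ℕ → Q → ℝ)
    (hproc : DeficitProcess Q n σ (Real.log (Fintype.card Q)) z) :
    ∀ t : ℕ, ∀ q : Q,
      z t q ≤ Real.exp 1 *
        Real.sqrt (4 * (Real.log (Fintype.card Q)) ^ 2 +
          2 * Real.sqrt (Real.exp 1) * Real.log (Fintype.card Q) * σ ^ 2 * (t : ℝ) / (n : ℝ)) := by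
  intro t q
  set p := log (Fintype.card Q)
  have hm' : (3 : ℝ) ≤ Fintype.card Q := by exact_mod_cast hm
  have hp : 1 < p := by
    rw [lt_log_iff_exp_lt (by linarith)]; linarith [exp_one_lt_three]
  have hc : (Fintype.card Q : ℝ) ^ p⁻¹ = exp 1 := by
    rw [rpow_def_of_pos (by linarith), mul_inv_cancel₀ (by positivity)]
  have : Nonempty Q := Fintype.card_pos_iff.1 (by omega)
  have hz := hproc.sq_add_le hp (by omega) t q
  rw [hc] at hz
  have key := le_exp_one_mul_sqrt (x := z t q) (a := 4 * p ^ 2) (r := p * σ ^ 2 * t / n)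
    (by positivity) (by positivity) (by convert hz using 4; ring)
  convert key using 3
  ring

/-- **Best choice of `p`.** If `m ≥ 3` and the deficit process satisfies the
moment conditions with `p = ln m`, then at every time `t` and for every quality
variable `q`, `z t q ≤ e * √(4p² + 2 √e p σ² t / n)`. -/
theorem perpetual_fairness_log_p (Q : Type*) [Fintype Q] (hm : 3 ≤ Fintype.card Q)
    (n : ℕ) (hn : 1 ≤ n) (σ : ℝ) (hσ : 0 ≤ σ)
    (z : ℕ → Q → ℝ)
    (hproc : DeficitProcess Q n σ (Real.log (Fintype.card Q)) z) :
    ∀ t : ℕ, ∀ q : Q,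
      z t q ≤ Real.exp 1 *
        Real.sqrt (4 * (Real.log (Fintype.card Q)) ^ 2 +
          2 * Real.sqrt (Real.exp 1) * Real.log (Fintype.card Q) * σ ^ 2 * (t : ℝ) / (n : ℝ)) :=
  perpetual_fairness_log_p_general Q hm n hn σ z hproc
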